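/- (Difference equation for q-Euler polynomials.) For every integer n ≥ 0 and all x ∈ ℂ: E_{n,q}(x,1) + E_{n,q}(x) = 2 ((−1;q)_n/2^n) x^n. -/

import Mathlib

open Finset PowerSeries

/-- The `q`-number `[n]_q = (1 - q^n)/(1 - q)`. -/
noncomputable def qNum (q : ℂ) (n : ℕ) : ℂ := (1 - q ^ n) / (1 - q)

/-- The `q`-factorial `[n]_q!`. -/
noncomputable def qFact (q : ℂ) : ℕ → ℂ
  | 0 => 1
  | n + 1 => qNum q (n + 1) * qFact q n

/-- The `q`-shifted factorial `(a; q)_n = ∏_{j=0}^{n-1} (1 - q^j a)`. -/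
noncomputable def qShift (a q : ℂ) (n : ℕ) : ℂ := ∏ j ∈ Finset.range n, (1 - q ^ j * a)

/-- The Gaussian binomial coefficient `[n choose k]_q = (q;q)_n / ((q;q)_{n-k} (q;q)_k)`. -/
noncomputable def qBinom (q : ℂ) (n k : ℕ) : ℂ :=
  qShift q q n / (qShift q q (n - k) * qShift q q k)

/-- The formal power series (in `t`) `𝓔_q(tx) = Σ_{n≥0} (-1;q)_n (x)^n t^n / (2^n [n]_q!)`. -/
noncomputable def qExp (q x : ℂ) : PowerSeries ℂ :=
  PowerSeries.mk fun n => qShift (-1) q n * x ^ n / (2 ^ n * qFact q n)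

/-- The generating series `Σ_{n≥0} a_n t^n / [n]_q!` of a sequence `a`. -/
noncomputable def qGen (q : ℂ) (a : ℕ → ℂ) : PowerSeries ℂ :=
  PowerSeries.mk fun n => a n / qFact q n

/-- The `q`-addition `(x ⊕_q y)^n`. -/
noncomputable def qAdd (q x y : ℂ) (n : ℕ) : ℂ :=
  ∑ k ∈ Finset.range (n + 1),
    qBinom q n k * (qShift (-1) q k * qShift (-1) q (n - k) / 2 ^ n) * x ^ k * y ^ (n - k)

/-!
Adding the defining identities for `y = 1` and `y = 0` (where `𝓔_q(0) = 1`) gives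
`(Σ (E_{n,q}(x,1) + E_{n,q}(x)) tⁿ/[n]_q!) (𝓔_q(t) + 1) = 2 𝓔_q(tx) (𝓔_q(t) + 1)`.
The factor `𝓔_q(t) + 1` has constant term `2`, so it cancels in `ℂ⟦t⟧`, and since
`[n]_q! ≠ 0` for `|q| < 1` the coefficients can be compared.
-/

section

variable {q : ℂ}

lemma qNum_ne_zero (hq : ‖q‖ < 1) {n : ℕ} (hn : n ≠ 0) : qNum q n ≠ 0 := by
  have hqn : ‖q ^ n‖ < 1 := by
    rw [norm_pow]
    exact pow_lt_one₀ (norm_nonneg q) hq hn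
  refine div_ne_zero (sub_ne_zero.2 fun h => ?_) (sub_ne_zero.2 fun h => ?_)
  · simp [← h] at hqn
  · simp [← h] at hq

lemma qFact_ne_zero (hq : ‖q‖ < 1) (n : ℕ) : qFact q n ≠ 0 := by
  induction n with
  | zero => simp [qFact]
  | succ k ih => exact mul_ne_zero (qNum_ne_zero hq k.succ_ne_zero) ih

lemma coeff_qGen (a : ℕ → ℂ) (n : ℕ) : coeff n (qGen q a) = a n / qFact q n :=
  coeff_mk _ _

lemma qGen_add (a b : ℕ → ℂ) : qGen q a + qGen q b = qGen q (a + b) := by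
  ext n
  simp only [map_add, coeff_qGen, Pi.add_apply, add_div]

lemma qGen_injective (hq : ‖q‖ < 1) : Function.Injective (qGen q) := by
  intro a b h
  funext n
  have hn := congrArg (coeff n) h
  rwa [coeff_qGen, coeff_qGen, div_left_inj' (qFact_ne_zero hq n)] at hn

lemma C_mul_qGen (c : ℂ) (a : ℕ → ℂ) : C c * qGen q a = qGen q fun n => c * a n := by
  ext n
  simp only [coeff_C_mul, coeff_qGen, mul_div_assoc]

lemma qExp_eq_qGen (x : ℂ) : qExp q x = qGen q fun n => qShift (-1) q n / 2 ^ n * x ^ n := by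
  ext n
  simp only [qExp, coeff_mk, coeff_qGen]
  ring

lemma qExp_zero : qExp q 0 = 1 := by
  ext (_ | n) <;> simp [qExp, qShift, qFact]

lemma constantCoeff_qExp (x : ℂ) : constantCoeff (qExp q x) = 1 := by
  simp [← coeff_zero_eq_constantCoeff_apply, qExp, qShift, qFact]

lemma qExp_add_one_ne_zero (x : ℂ) : qExp q x + 1 ≠ 0 := by
  intro h
  have h0 := congrArg constantCoeff h
  norm_num [constantCoeff_qExp] at h0

end

theorem qEuler_difference_general (q : ℂ) (hq1 : ‖q‖ < 1)
    (E : ℂ → ℂ → ℕ → ℂ)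
    (hE : ∀ x y : ℂ, qGen q (E x y) * (qExp q 1 + 1) = 2 * qExp q x * qExp q y)
    (n : ℕ) (x : ℂ) :
    E x 1 n + E x 0 n = 2 * (qShift (-1) q n / 2 ^ n) * x ^ n := by
  have hsum : qGen q (E x 1 + E x 0) * (qExp q 1 + 1) = C 2 * qExp q x * (qExp q 1 + 1) := by
    rw [← qGen_add, add_mul, hE, hE, qExp_zero, map_ofNat]
    ring
  have hgen := mul_right_cancel₀ (qExp_add_one_ne_zero 1) hsum
  rw [qExp_eq_qGen, C_mul_qGen] at hgen
  simpa only [Pi.add_apply, mul_assoc] using congrFun (qGen_injective hq1 hgen) n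

/-- Difference equation for the `q`-Euler polynomials:
`E_{n,q}(x,1) + E_{n,q}(x) = 2((-1;q)_n/2^n) x^n` for `n ≥ 0`. -/
theorem qEuler_difference (q : ℂ) (hq0 : 0 < ‖q‖) (hq1 : ‖q‖ < 1)
    (E : ℂ → ℂ → ℕ → ℂ)
    (hE : ∀ x y : ℂ, qGen q (E x y) * (qExp q 1 + 1) = 2 * qExp q x * qExp q y)
    (n : ℕ) (x : ℂ) :
    E x 1 n + E x 0 n = 2 * (qShift (-1) q n / 2 ^ n) * x ^ n :=
  qEuler_difference_general q hq1 E hE n x
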